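/- Let G : ℝ → ℝ be continuous and nondecreasing, and for ε > 0 let G_ε(x) := (x − J_ε(x))/ε be its Yosida approximation, where J_ε is the inverse of x ↦ x + εG(x). Then G_ε converges to G uniformly on compact subsets of ℝ as ε → 0⁺, i.e. for every compact K ⊆ ℝ, sup_{x ∈ K} |G_ε(x) − G(x)| → 0 as ε → 0⁺. -/
import Mathlib

open Filter Metric Set

/-- Let `G : ℝ → ℝ` be continuous and nondecreasing, and for `ε > 0` let
`Gε ε x := (x − J ε x)/ε` be its Yosida approximation, where `J ε` is the inverse of
`x ↦ x + ε * G x`. Then `Gε ε` converges to `G` uniformly on compact subsets of `ℝ`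
as `ε → 0⁺`. -/
theorem stmt_6 (G : ℝ → ℝ) (hGcont : Continuous G) (hGmono : Monotone G)
    (J : ℝ → ℝ → ℝ)
    (hJ_right : ∀ ε : ℝ, 0 < ε → ∀ x : ℝ, J ε x + ε * G (J ε x) = x)
    (hJ_left : ∀ ε : ℝ, 0 < ε → ∀ x : ℝ, J ε (x + ε * G x) = x)
    (Gε : ℝ → ℝ → ℝ) (hGε : ∀ ε : ℝ, 0 < ε → ∀ x : ℝ, Gε ε x = (x - J ε x) / ε) :
    ∀ K : Set ℝ, IsCompact K →
      TendstoUniformlyOn (fun ε x => Gε ε x) G (nhdsWithin 0 (Set.Ioi 0)) K := by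
  intro K hK
  obtain ⟨C, hC⟩ := hK.exists_bound_of_continuousOn hGcont.continuousOn
  set M : ℝ := max C 0 with hM
  have hM0 : 0 ≤ M := le_max_right _ _
  have hMx : ∀ x ∈ K, |G x| ≤ M := fun x hx => le_trans (hC x hx) (le_max_left _ _)
  have hK' : IsCompact (Metric.cthickening M K) := hK.cthickening
  have hUC : UniformContinuousOn G (Metric.cthickening M K) :=
    hK'.uniformContinuousOn_of_continuous hGcont.continuousOn
  rw [Metric.tendstoUniformlyOn_iff]
  intro δ hδ
  rw [Metric.uniformContinuousOn_iff] at hUC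
  obtain ⟨η, hη, hη'⟩ := hUC δ hδ
  have hr : 0 < min 1 (η / (M + 1)) := lt_min one_pos (div_pos hη (by linarith))
  filter_upwards [Ioo_mem_nhdsGT_of_mem (Set.mem_Ico.mpr ⟨le_rfl, hr⟩)] with ε hε x hx
  obtain ⟨hε0, hεr⟩ := hε
  set a := J ε x with ha
  have hkey : a + ε * G a = x := hJ_right ε hε0 x
  have hGεx : Gε ε x = G a := by
    rw [hGε ε hε0 x]
    field_simp
    linarith
  have hGa : |G a| ≤ |G x| := by
    rcases le_or_gt 0 (G a) with h | h
    · have hax : a ≤ x := by nlinarith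
      have := hGmono hax
      rw [abs_of_nonneg h]
      exact le_trans this (le_abs_self _)
    · have hax : x ≤ a := by nlinarith
      have := hGmono hax
      rw [abs_of_neg h]
      calc -G a ≤ -G x := by linarith
        _ ≤ |G x| := neg_le_abs _
  have hdist : dist a x = ε * |G a| := by
    have h1 : a - x = -(ε * G a) := by linarith
    rw [Real.dist_eq, h1, abs_neg, abs_mul, abs_of_pos hε0]
  have hε1 : ε < 1 := lt_of_lt_of_le hεr (min_le_left _ _)
  have hεη : ε * (M + 1) < η := by
    have := lt_of_lt_of_le hεr (min_le_right _ _)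
    rwa [lt_div_iff₀ (by linarith)] at this
  have hGaM : |G a| ≤ M := le_trans hGa (hMx x hx)
  have hd1 : dist a x ≤ M := by rw [hdist]; nlinarith
  have hd2 : dist a x < η := by rw [hdist]; nlinarith
  have haK' : a ∈ Metric.cthickening M K := Metric.mem_cthickening_of_dist_le a x M K hx hd1
  have hxK' : x ∈ Metric.cthickening M K := Metric.self_subset_cthickening K hx
  have := hη' x hxK' a haK' (by rwa [dist_comm])
  rw [hGεx]
  exact this
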